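/- Let n ≥ 1, a ≥ 0, μ ∈ ℝⁿ. Let F be a nonempty family of n×n ordered linear smoothers and let d be the semimetric d(A, B)² = a‖A − B‖_F² + ‖(A − B)μ‖². Then for every integer N ≥ 1 there exists a subset S ⊆ F with cardinality at most N such that every B ∈ F is within d-distance Δ(F, d)/√N of some element of S, where Δ(F, d) = sup_{A,B ∈ F} d(A, B) is assumed finite. -/

import Mathlib

open Matrix BigOperators

noncomputable section

/-- Squared Euclidean norm of a vector in `ℝⁿ`. -/
def sqnorm {n : ℕ} (v : Fin n → ℝ) : ℝ := ∑ i, v i ^ 2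

/-- Squared Frobenius norm of an `n × n` matrix. -/
def frobSq {n : ℕ} (A : Matrix (Fin n) (Fin n) ℝ) : ℝ := ∑ i, ∑ j, A i j ^ 2

/-- A family of ordered linear smoothers. -/
def IsOrderedSmootherFamily {n : ℕ} (F : Set (Matrix (Fin n) (Fin n) ℝ)) : Prop :=
  (∀ A ∈ F, A.IsSymm ∧ ∀ w : Fin n → ℝ, 0 ≤ w ⬝ᵥ A.mulVec w ∧ w ⬝ᵥ A.mulVec w ≤ sqnorm w) ∧
  (∀ A ∈ F, ∀ B ∈ F, A * B = B * A) ∧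
  (∀ A ∈ F, ∀ B ∈ F, (B - A).PosSemidef ∨ (A - B).PosSemidef)

/-- The semimetric `d(A, B) = √(a ‖A − B‖_F² + ‖(A − B)μ‖²)`. -/
def dmet {n : ℕ} (a : ℝ) (μ : Fin n → ℝ) (A B : Matrix (Fin n) (Fin n) ℝ) : ℝ :=
  Real.sqrt (a * frobSq (A - B) + sqnorm ((A - B).mulVec μ))

def Matrix.PosSemidef.sqrt {n : ℕ} {X : Matrix (Fin n) (Fin n) ℝ} (hX : X.PosSemidef) :
    Matrix (Fin n) (Fin n) ℝ :=
  (hX.1.eigenvectorUnitary : Matrix (Fin n) (Fin n) ℝ) *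
    diagonal ((RCLike.ofReal ∘ Real.sqrt ∘ hX.1.eigenvalues : Fin n → ℝ)) *
    star (hX.1.eigenvectorUnitary : Matrix (Fin n) (Fin n) ℝ)

lemma Matrix.IsHermitian.spectral_theorem_old {n : ℕ} {X : Matrix (Fin n) (Fin n) ℝ}
    (hX : X.IsHermitian) :
    X = (hX.eigenvectorUnitary : Matrix (Fin n) (Fin n) ℝ) *
      diagonal (RCLike.ofReal ∘ hX.eigenvalues) *
      star (hX.eigenvectorUnitary : Matrix (Fin n) (Fin n) ℝ) := by
  conv_lhs => rw [hX.spectral_theorem, Unitary.conjStarAlgAut_apply]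

lemma Matrix.PosSemidef.posSemidef_sqrt {n : ℕ} {X : Matrix (Fin n) (Fin n) ℝ}
    (hX : X.PosSemidef) : hX.sqrt.PosSemidef := by
  have hD : (diagonal ((RCLike.ofReal ∘ Real.sqrt ∘ hX.1.eigenvalues : Fin n → ℝ))).PosSemidef := by
    rw [Matrix.posSemidef_diagonal_iff]
    intro i; simp [Real.sqrt_nonneg]
  have := hD.mul_mul_conjTranspose_same (hX.1.eigenvectorUnitary : Matrix (Fin n) (Fin n) ℝ)
  rw [Matrix.PosSemidef.sqrt, Matrix.star_eq_conjTranspose]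
  exact this

lemma Matrix.PosSemidef.sqrt_mul_self {n : ℕ} {X : Matrix (Fin n) (Fin n) ℝ}
    (hX : X.PosSemidef) : hX.sqrt * hX.sqrt = X := by
  set U : Matrix (Fin n) (Fin n) ℝ := (hX.1.eigenvectorUnitary : Matrix (Fin n) (Fin n) ℝ) with hU
  have hUU : star U * U = 1 := Unitary.coe_star_mul_self _
  have hDD : diagonal ((RCLike.ofReal ∘ Real.sqrt ∘ hX.1.eigenvalues : Fin n → ℝ)) *
      diagonal ((RCLike.ofReal ∘ Real.sqrt ∘ hX.1.eigenvalues : Fin n → ℝ)) =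
      diagonal (RCLike.ofReal ∘ hX.1.eigenvalues) := by
    rw [Matrix.diagonal_mul_diagonal]
    congr 1; funext i
    simp [Real.mul_self_sqrt (hX.eigenvalues_nonneg i)]
  conv_rhs => rw [hX.1.spectral_theorem_old]
  rw [Matrix.PosSemidef.sqrt, ← hU, ← hDD]
  calc U * diagonal ((RCLike.ofReal ∘ Real.sqrt ∘ hX.1.eigenvalues : Fin n → ℝ)) * star U *
        (U * diagonal ((RCLike.ofReal ∘ Real.sqrt ∘ hX.1.eigenvalues : Fin n → ℝ)) * star U)
      = U * diagonal ((RCLike.ofReal ∘ Real.sqrt ∘ hX.1.eigenvalues : Fin n → ℝ)) * (star U * U) *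
        diagonal ((RCLike.ofReal ∘ Real.sqrt ∘ hX.1.eigenvalues : Fin n → ℝ)) * star U := by
        simp only [Matrix.mul_assoc]
    _ = _ := by rw [hUU, Matrix.mul_one]; simp only [Matrix.mul_assoc]

lemma commute_sqrt {n : ℕ} {X Y : Matrix (Fin n) (Fin n) ℝ} (hX : X.PosSemidef)
    (h : X * Y = Y * X) : hX.sqrt * Y = Y * hX.sqrt := by
  set U : Matrix (Fin n) (Fin n) ℝ := (hX.1.eigenvectorUnitary : Matrix (Fin n) (Fin n) ℝ) with hU
  have hUU : star U * U = 1 := Unitary.coe_star_mul_self _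
  have hUU' : U * star U = 1 := Unitary.coe_mul_star_self _
  set d : Fin n → ℝ := hX.1.eigenvalues with hd
  have hco : (RCLike.ofReal ∘ d : Fin n → ℝ) = d := by
    funext i; simp [RCLike.ofReal_real_eq_id]
  have hspec : X = U * diagonal d * star U := by
    have := hX.1.spectral_theorem_old
    rwa [hco] at this
  set M : Matrix (Fin n) (Fin n) ℝ := star U * Y * U with hM
  have e1 : star U * (X * Y) * U = diagonal d * M := by
    rw [hspec, hM]
    calc star U * (U * diagonal d * star U * Y) * U
        = (star U * U) * diagonal d * (star U * Y * U) := by simp only [Matrix.mul_assoc]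
      _ = diagonal d * (star U * Y * U) := by rw [hUU, Matrix.one_mul]
  have e2 : star U * (Y * X) * U = M * diagonal d := by
    rw [hspec, hM]
    calc star U * (Y * (U * diagonal d * star U)) * U
        = (star U * Y * U) * diagonal d * (star U * U) := by simp only [Matrix.mul_assoc]
      _ = (star U * Y * U) * diagonal d := by rw [hUU, Matrix.mul_one]
  have hDM : diagonal d * M = M * diagonal d := by rw [← e1, ← e2, h]
  have key : ∀ i j, d i * M i j = M i j * d j := by
    intro i j
    have := congrFun (congrFun hDM i) j
    simpa only [Matrix.diagonal_mul, Matrix.mul_diagonal] using this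
  set E : Matrix (Fin n) (Fin n) ℝ := diagonal (fun i => Real.sqrt (d i)) with hE
  have hEM : E * M = M * E := by
    ext i j
    simp only [hE, Matrix.diagonal_mul, Matrix.mul_diagonal]
    by_cases hz : M i j = 0
    · simp [hz]
    · have hdij : d i = d j := by
        have h0 : (d i - d j) * M i j = 0 := by linear_combination key i j
        rcases mul_eq_zero.mp h0 with h' | h'
        · linarith
        · exact absurd h' hz
      rw [hdij, mul_comm]
  have hco2 : (RCLike.ofReal ∘ Real.sqrt ∘ hX.1.eigenvalues : Fin n → ℝ) = fun i => Real.sqrt (d i) := by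
    funext i; simp [RCLike.ofReal_real_eq_id, hd]
  have hsq : hX.sqrt = U * E * star U := by
    rw [Matrix.PosSemidef.sqrt, hco2, ← hU, hE]
  have hg : ∀ P Q : Matrix (Fin n) (Fin n) ℝ,
      (U * P * star U) * (U * Q * star U) = U * (P * Q) * star U := by
    intro P Q
    calc (U * P * star U) * (U * Q * star U)
        = U * (P * ((star U * U) * (Q * star U))) := by simp only [Matrix.mul_assoc]
      _ = U * (P * Q) * star U := by rw [hUU, Matrix.one_mul]; simp only [Matrix.mul_assoc]
  have hY : U * M * star U = Y := by
    rw [hM]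
    calc U * (star U * Y * U) * star U = (U * star U) * Y * (U * star U) := by
          simp only [Matrix.mul_assoc]
      _ = Y := by rw [hUU']; simp
  rw [hsq, ← hY, hg, hg, hEM]


lemma posSemidef_mul_of_commute {n : ℕ} {X Y : Matrix (Fin n) (Fin n) ℝ}
    (hX : X.PosSemidef) (hY : Y.PosSemidef) (h : X * Y = Y * X) : (X * Y).PosSemidef := by
  have hc := commute_sqrt hX h
  have hs := hX.posSemidef_sqrt
  have h2 : X * Y = hX.sqrt * Y * hX.sqrtᴴ := by
    rw [hs.1]
    calc X * Y = (hX.sqrt * hX.sqrt) * Y := by rw [hX.sqrt_mul_self]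
      _ = hX.sqrt * (Y * hX.sqrt) := by rw [Matrix.mul_assoc, hc]
      _ = hX.sqrt * Y * hX.sqrt := by rw [Matrix.mul_assoc]
  rw [h2]
  exact hY.mul_mul_conjTranspose_same _

lemma psd_diag_nonneg {n : ℕ} {P : Matrix (Fin n) (Fin n) ℝ} (hP : P.PosSemidef) (i : Fin n) :
    0 ≤ P i i := by simpa using hP.dotProduct_mulVec_nonneg (Pi.single i 1)

lemma psd_apply_symm {n : ℕ} {P : Matrix (Fin n) (Fin n) ℝ} (hP : P.PosSemidef) (i j : Fin n) :
    P i j = P j i := by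
  conv_lhs => rw [← hP.1]
  simp [Matrix.conjTranspose_apply]

lemma cross_frob_nonneg {n : ℕ} {X Y : Matrix (Fin n) (Fin n) ℝ}
    (hX : X.PosSemidef) (hY : Y.PosSemidef) (h : X * Y = Y * X) :
    0 ≤ ∑ i, ∑ j, X i j * Y i j := by
  have hXY := posSemidef_mul_of_commute hX hY h
  have : ∀ i : Fin n, ∑ j, X i j * Y i j = (X * Y) i i := by
    intro i
    rw [Matrix.mul_apply]
    exact Finset.sum_congr rfl fun j _ => by rw [psd_apply_symm hY j i]
  calc (0:ℝ) ≤ ∑ i, (X * Y) i i := Finset.sum_nonneg fun i _ => psd_diag_nonneg hXY i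
    _ = ∑ i, ∑ j, X i j * Y i j := by exact Finset.sum_congr rfl fun i _ => (this i).symm

lemma cross_vec_nonneg {n : ℕ} {X Y : Matrix (Fin n) (Fin n) ℝ} (μ : Fin n → ℝ)
    (hX : X.PosSemidef) (hY : Y.PosSemidef) (h : X * Y = Y * X) :
    0 ≤ (X *ᵥ μ) ⬝ᵥ (Y *ᵥ μ) := by
  have hXY := posSemidef_mul_of_commute hX hY h
  have h0 : (X *ᵥ μ) ⬝ᵥ (Y *ᵥ μ) = μ ⬝ᵥ ((X * Y) *ᵥ μ) := by
    rw [← Matrix.mulVec_mulVec, Matrix.dotProduct_mulVec μ X, ← Matrix.mulVec_transpose]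
    have hT : Xᵀ = X := by
      ext i j; rw [Matrix.transpose_apply, psd_apply_symm hX]
    rw [hT]
  rw [h0]
  simpa using hXY.dotProduct_mulVec_nonneg μ

def qm {n : ℕ} (a : ℝ) (μ : Fin n → ℝ) (A B : Matrix (Fin n) (Fin n) ℝ) : ℝ :=
  a * frobSq (A - B) + sqnorm ((A - B).mulVec μ)

lemma sqnorm_nonneg {n : ℕ} (v : Fin n → ℝ) : 0 ≤ sqnorm v :=
  Finset.sum_nonneg fun _ _ => sq_nonneg _

lemma frobSq_nonneg {n : ℕ} (A : Matrix (Fin n) (Fin n) ℝ) : 0 ≤ frobSq A :=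
  Finset.sum_nonneg fun _ _ => Finset.sum_nonneg fun _ _ => sq_nonneg _

lemma qm_nonneg {n : ℕ} {a : ℝ} (ha : 0 ≤ a) (μ : Fin n → ℝ) (A B : Matrix (Fin n) (Fin n) ℝ) :
    0 ≤ qm a μ A B :=
  add_nonneg (mul_nonneg ha (frobSq_nonneg _)) (sqnorm_nonneg _)

lemma dmet_eq_sqrt_qm {n : ℕ} (a : ℝ) (μ : Fin n → ℝ) (A B : Matrix (Fin n) (Fin n) ℝ) :
    dmet a μ A B = Real.sqrt (qm a μ A B) := rfl

lemma dmet_sq {n : ℕ} {a : ℝ} (ha : 0 ≤ a) (μ : Fin n → ℝ) (A B : Matrix (Fin n) (Fin n) ℝ) :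
    dmet a μ A B ^ 2 = qm a μ A B := by
  rw [dmet_eq_sqrt_qm, Real.sq_sqrt (qm_nonneg ha μ A B)]

lemma dmet_nonneg {n : ℕ} (a : ℝ) (μ : Fin n → ℝ) (A B : Matrix (Fin n) (Fin n) ℝ) :
    0 ≤ dmet a μ A B := Real.sqrt_nonneg _

lemma dmet_self {n : ℕ} (a : ℝ) (μ : Fin n → ℝ) (A : Matrix (Fin n) (Fin n) ℝ) :
    dmet a μ A A = 0 := by
  simp [dmet, frobSq, sqnorm, sub_self]

lemma frobSq_neg {n : ℕ} (Z : Matrix (Fin n) (Fin n) ℝ) : frobSq (-Z) = frobSq Z := by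
  simp [frobSq, Matrix.neg_apply]

lemma sqnorm_neg_mulVec {n : ℕ} (Z : Matrix (Fin n) (Fin n) ℝ) (μ : Fin n → ℝ) :
    sqnorm ((-Z) *ᵥ μ) = sqnorm (Z *ᵥ μ) := by
  simp [sqnorm, Matrix.neg_mulVec]

lemma dmet_comm {n : ℕ} (a : ℝ) (μ : Fin n → ℝ) (A B : Matrix (Fin n) (Fin n) ℝ) :
    dmet a μ A B = dmet a μ B A := by
  have h : A - B = -(B - A) := by abel
  rw [dmet, dmet, h, frobSq_neg, sqnorm_neg_mulVec]

lemma frobSq_add {n : ℕ} (X Y : Matrix (Fin n) (Fin n) ℝ) :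
    frobSq (X + Y) = frobSq X + 2 * (∑ i, ∑ j, X i j * Y i j) + frobSq Y := by
  simp only [frobSq, Matrix.add_apply, add_sq, Finset.sum_add_distrib, Finset.mul_sum]
  ring_nf

lemma sqnorm_add {n : ℕ} (u v : Fin n → ℝ) :
    sqnorm (u + v) = sqnorm u + 2 * (u ⬝ᵥ v) + sqnorm v := by
  simp only [sqnorm, Pi.add_apply, add_sq, Finset.sum_add_distrib, dotProduct, Finset.mul_sum]
  ring_nf

lemma qm_superadd {n : ℕ} {a : ℝ} (ha : 0 ≤ a) (μ : Fin n → ℝ)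
    {A B C : Matrix (Fin n) (Fin n) ℝ} (hBA : (B - A).PosSemidef) (hCB : (C - B).PosSemidef)
    (hcomm : (B - A) * (C - B) = (C - B) * (B - A)) :
    qm a μ A B + qm a μ B C ≤ qm a μ A C := by
  set X := B - A with hX
  set Y := C - B with hY
  have h1 : A - B = -X := by rw [hX]; abel
  have h2 : B - C = -Y := by rw [hY]; abel
  have h3 : A - C = -(X + Y) := by rw [hX, hY]; abel
  rw [qm, qm, qm, h1, h2, h3, frobSq_neg, frobSq_neg, frobSq_neg,
    sqnorm_neg_mulVec, sqnorm_neg_mulVec, sqnorm_neg_mulVec,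
    frobSq_add, Matrix.add_mulVec, sqnorm_add]
  have hc1 := cross_frob_nonneg hBA hCB hcomm
  have hc2 := cross_vec_nonneg μ hBA hCB hcomm
  nlinarith [hc1, hc2]

lemma sub_mul_comm {n : ℕ} {A B C : Matrix (Fin n) (Fin n) ℝ}
    (hAB : A * B = B * A) (hAC : A * C = C * A) (hBC : B * C = C * B) :
    (B - A) * (C - B) = (C - B) * (B - A) := by
  simp only [Matrix.sub_mul, Matrix.mul_sub]
  rw [hBC, hAC, hAB]
  abel

lemma exists_top {n : ℕ} {F : Set (Matrix (Fin n) (Fin n) ℝ)}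
    (hF : IsOrderedSmootherFamily F) (S : Finset (Matrix (Fin n) (Fin n) ℝ)) :
    ↑S ⊆ F → S.Nonempty → ∃ t ∈ S, ∀ s ∈ S, (t - s).PosSemidef := by
  classical
  induction S using Finset.induction_on with
  | empty => intro _ h; exact absurd h (by simp)
  | @insert A S hA ih =>
    intro hsub _
    by_cases hS : S.Nonempty
    · obtain ⟨t, htS, htop⟩ := ih (fun x hx => hsub (by simp [hx])) hS
      have hAF : A ∈ F := hsub (by simp)
      have htF : t ∈ F := hsub (by simp [htS])
      rcases hF.2.2 A hAF t htF with h | h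
      · -- t - A PSD : t is top
        refine ⟨t, by simp [htS], fun s hs => ?_⟩
        rcases Finset.mem_insert.mp hs with rfl | hs'
        · exact h
        · exact htop s hs'
      · -- A - t PSD : A is top
        refine ⟨A, by simp, fun s hs => ?_⟩
        rcases Finset.mem_insert.mp hs with rfl | hs'
        · simpa [sub_self] using (Matrix.PosSemidef.zero : (0 : Matrix (Fin n) (Fin n) ℝ).PosSemidef)
        · have : A - s = (A - t) + (t - s) := by abel
          rw [this]
          exact h.add (htop s hs')
    · have hSempty : S = ∅ := Finset.not_nonempty_iff_eq_empty.mp hS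
      subst hSempty
      refine ⟨A, by simp, fun s hs => ?_⟩
      rcases Finset.mem_insert.mp hs with rfl | hs'
      · simpa [sub_self] using (Matrix.PosSemidef.zero : (0 : Matrix (Fin n) (Fin n) ℝ).PosSemidef)
      · exact absurd hs' (by simp)

lemma chain_lemma {n : ℕ} {F : Set (Matrix (Fin n) (Fin n) ℝ)}
    (hF : IsOrderedSmootherFamily F) {a : ℝ} (ha : 0 ≤ a) (μ : Fin n → ℝ)
    {ε : ℝ} (hε : 0 ≤ ε) (S : Finset (Matrix (Fin n) (Fin n) ℝ)) :
    ↑S ⊆ F → S.Nonempty → (∀ x ∈ S, ∀ y ∈ S, x ≠ y → ε < dmet a μ x y) →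
    ∃ t ∈ S, (∀ s ∈ S, (t - s).PosSemidef) ∧ ∃ b ∈ S,
      ((S.card : ℝ) - 1) * ε ^ 2 ≤ dmet a μ b t ^ 2 ∧
      (2 ≤ S.card → ((S.card : ℝ) - 1) * ε ^ 2 < dmet a μ b t ^ 2) := by
  classical
  induction S using Finset.strongInduction with
  | _ S ih =>
    intro hsub hne hsep
    obtain ⟨t, htS, htop⟩ := exists_top hF S hsub hne
    by_cases hcard : S.card ≤ 1
    · have hcard1 : S.card = 1 := le_antisymm hcard (Finset.card_pos.mpr hne)
      refine ⟨t, htS, htop, t, htS, ?_, ?_⟩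
      · rw [hcard1]; norm_num [sq_nonneg]
      · intro h2; omega
    · push_neg at hcard
      have h2card : 2 ≤ S.card := hcard
      set S' := S.erase t with hS'
      have hssub : S' ⊂ S := Finset.erase_ssubset htS
      have hS'card : S'.card = S.card - 1 := Finset.card_erase_of_mem htS
      have hS'ne : S'.Nonempty := by
        rw [← Finset.card_pos, hS'card]; omega
      obtain ⟨t', ht'S', htop', b, hbS', hb1, hb2⟩ :=
        ih S' hssub (fun x hx => hsub (Finset.erase_subset _ _ hx)) hS'ne
          (fun x hx y hy hxy => hsep x (Finset.erase_subset _ _ hx) y (Finset.erase_subset _ _ hy) hxy)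
      have hbS : b ∈ S := Finset.erase_subset _ _ hbS'
      have ht'S : t' ∈ S := Finset.erase_subset _ _ ht'S'
      have ht'ne : t' ≠ t := Finset.ne_of_mem_erase ht'S'
      refine ⟨t, htS, htop, b, hbS, ?_, fun _ => ?_⟩
      all_goals {
        have hPSD1 : (t' - b).PosSemidef := htop' b hbS'
        have hPSD2 : (t - t').PosSemidef := htop t' ht'S
        have hcomm : (t' - b) * (t - t') = (t - t') * (t' - b) :=
          sub_mul_comm (hF.2.1 b (hsub hbS) t' (hsub ht'S))
            (hF.2.1 b (hsub hbS) t (hsub htS)) (hF.2.1 t' (hsub ht'S) t (hsub htS))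
        have hsup := qm_superadd ha μ hPSD1 hPSD2 hcomm
        rw [← dmet_sq ha μ b t', ← dmet_sq ha μ t' t, ← dmet_sq ha μ b t] at hsup
        have hstep : ε ^ 2 < dmet a μ t' t ^ 2 := by
          have := hsep t' ht'S t htS ht'ne
          exact pow_lt_pow_left₀ this hε (by norm_num)
        have hcast : ((S'.card : ℝ)) = (S.card : ℝ) - 1 := by
          rw [hS'card]
          have : (1:ℕ) ≤ S.card := by omega
          push_cast [this]
          ring
        rw [hcast] at hb1
        nlinarith [hb1, hstep, hsup]
      }


/-- Covering lemma for ordered linear smoothers: for every `N ≥ 1` there is a subset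
`S ⊆ F` with `|S| ≤ N` which is a `Δ(F, d)/√N`-net of `F`. -/
theorem ordered_smoothers_covering
    (n : ℕ) (hn : 1 ≤ n) (a : ℝ) (ha : 0 ≤ a) (μ : Fin n → ℝ)
    (F : Set (Matrix (Fin n) (Fin n) ℝ)) (hne : F.Nonempty)
    (hF : IsOrderedSmootherFamily F)
    (hbdd : BddAbove {r : ℝ | ∃ A ∈ F, ∃ B ∈ F, r = dmet a μ A B}) :
    ∀ N : ℕ, 1 ≤ N →
      ∃ S : Set (Matrix (Fin n) (Fin n) ℝ), S ⊆ F ∧ S.Finite ∧ S.ncard ≤ N ∧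
        ∀ B ∈ F, ∃ s ∈ S,
          dmet a μ B s ≤
            sSup {r : ℝ | ∃ A ∈ F, ∃ B ∈ F, r = dmet a μ A B} / Real.sqrt N := by
  classical
  intro N hN
  set Δ := sSup {r : ℝ | ∃ A ∈ F, ∃ B ∈ F, r = dmet a μ A B} with hΔ
  obtain ⟨A₀, hA₀⟩ := hne
  have hmem : ∀ A ∈ F, ∀ B ∈ F, dmet a μ A B ≤ Δ := fun A hA B hB =>
    le_csSup hbdd ⟨A, hA, B, hB, rfl⟩
  have hΔ0 : 0 ≤ Δ := by
    have := hmem A₀ hA₀ A₀ hA₀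
    rw [dmet_self] at this
    exact this
  set ε := Δ / Real.sqrt N with hε'
  have hsqrtN : (0:ℝ) < Real.sqrt N := Real.sqrt_pos.mpr (by positivity)
  have hε : 0 ≤ ε := div_nonneg hΔ0 hsqrtN.le
  have hNε : (N : ℝ) * ε ^ 2 = Δ ^ 2 := by
    rw [hε', div_pow, Real.sq_sqrt (by positivity : (0:ℝ) ≤ (N:ℝ))]
    field_simp
  -- separated sets have cardinality at most N
  have hbound : ∀ S : Finset (Matrix (Fin n) (Fin n) ℝ), ↑S ⊆ F →
      (∀ x ∈ S, ∀ y ∈ S, x ≠ y → ε < dmet a μ x y) → S.card ≤ N := by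
    intro S hsub hsep
    by_contra hc
    push_neg at hc
    have h2 : 2 ≤ S.card := by omega
    have hSne : S.Nonempty := Finset.card_pos.mp (by omega)
    obtain ⟨t, htS, _, b, hbS, _, hstrict⟩ := chain_lemma hF ha μ hε S hsub hSne hsep
    have h1 := hstrict h2
    have hle : dmet a μ b t ≤ Δ := hmem b (hsub hbS) t (hsub htS)
    have hsq : dmet a μ b t ^ 2 ≤ Δ ^ 2 := pow_le_pow_left₀ (dmet_nonneg a μ b t) hle 2
    have hNle : (N : ℝ) ≤ (S.card : ℝ) - 1 := by
      have : (N + 1 : ℕ) ≤ S.card := hc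
      push_cast
      have : ((N:ℝ) + 1) ≤ (S.card : ℝ) := by exact_mod_cast this
      linarith
    nlinarith [mul_le_mul_of_nonneg_right hNle (sq_nonneg ε)]
  -- property of cardinalities
  set P : ℕ → Prop := fun k => ∃ S : Finset (Matrix (Fin n) (Fin n) ℝ), ↑S ⊆ F ∧
    (∀ x ∈ S, ∀ y ∈ S, x ≠ y → ε < dmet a μ x y) ∧ S.card = k with hP
  have hP1 : P 1 := by
    refine ⟨{A₀}, by simp [hA₀], ?_, by simp⟩
    intro x hx y hy hxy
    simp only [Finset.mem_singleton] at hx hy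
    exact absurd (hx.trans hy.symm) hxy
  set k := Nat.findGreatest P N with hk
  have hPk : P k := Nat.findGreatest_spec hN hP1
  have hk1 : 1 ≤ k := Nat.le_findGreatest hN hP1
  have hkN : k ≤ N := Nat.findGreatest_le N
  obtain ⟨S, hsub, hsep, hcard⟩ := hPk
  refine ⟨↑S, hsub, S.finite_toSet, by rw [Set.ncard_coe_finset, hcard]; exact hkN, ?_⟩
  intro B hB
  by_contra hcontra
  push_neg at hcontra
  have hfar : ∀ s ∈ S, ε < dmet a μ B s := by
    intro s hs
    exact hcontra s (by exact_mod_cast hs)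
  have hBS : B ∉ S := by
    intro hBS
    have := hfar B hBS
    rw [dmet_self] at this
    linarith
  have hT : P (k + 1) := by
    refine ⟨insert B S, ?_, ?_, by rw [Finset.card_insert_of_notMem hBS, hcard]⟩
    · intro x hx
      rcases Finset.mem_insert.mp (by exact_mod_cast hx) with rfl | hx'
      · exact hB
      · exact hsub hx'
    · intro x hx y hy hxy
      rcases Finset.mem_insert.mp hx with rfl | hx' <;>
        rcases Finset.mem_insert.mp hy with rfl | hy'
      · exact absurd rfl hxy
      · exact hfar y hy'
      · rw [dmet_comm]; exact hfar x hx'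
      · exact hsep x hx' y hy' hxy
  have hk1N : k + 1 ≤ N := by
    obtain ⟨T, hTsub, hTsep, hTcard⟩ := hT
    have := hbound T hTsub hTsep
    omega
  exact Nat.findGreatest_is_greatest (by omega) hk1N hT
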